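/- Let P be a probability measure on R^d, m ∈ (0,1), and let X ⊂ R^d be a compact set. Define q_{P,X}(m) = sup_{x ∈ X} F_x^{-1}(m), where F_x(t) = P(||X-x||² ≤ t). Then q_{P,X}(m) < ∞, and for all x, x' ∈ X, |F_{x'}^{-1}(m) − F_x^{-1}(m)| ≤ 2 √(q_{P,X}(m)) · ||x' − x||. -/
import Mathlib


open MeasureTheory Set

noncomputable def distCdf {d : ℕ} (P : Measure (EuclideanSpace ℝ (Fin d)))
    (x : EuclideanSpace ℝ (Fin d)) (t : ℝ) : ℝ :=
  (P {y | ‖y - x‖ ≤ t}).toReal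

noncomputable def sqDistCdf {d : ℕ} (P : Measure (EuclideanSpace ℝ (Fin d)))
    (x : EuclideanSpace ℝ (Fin d)) (t : ℝ) : ℝ :=
  (P {y | ‖y - x‖ ^ 2 ≤ t}).toReal

noncomputable def quantile (F : ℝ → ℝ) (u : ℝ) : ℝ :=
  sInf {t : ℝ | u ≤ F t}

/-- The squared distance-to-measure at resolution `m`:
`δ_{P,m}(x)² = (1/m) ∫_0^m F_x^{-1}(u) du`. -/
noncomputable def dtmSq {d : ℕ} (P : Measure (EuclideanSpace ℝ (Fin d))) (m : ℝ)
    (x : EuclideanSpace ℝ (Fin d)) : ℝ :=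
  (1 / m) * ∫ u in Set.Ioo (0 : ℝ) m, quantile (sqDistCdf P x) u

/-- The distance-to-measure at resolution `m`. -/
noncomputable def dtm {d : ℕ} (P : Measure (EuclideanSpace ℝ (Fin d))) (m : ℝ)
    (x : EuclideanSpace ℝ (Fin d)) : ℝ :=
  Real.sqrt (dtmSq P m x)

section Aux
variable {d : ℕ} (P : Measure (EuclideanSpace ℝ (Fin d))) [IsProbabilityMeasure P] {m : ℝ}

lemma aux_pos_mem {x : EuclideanSpace ℝ (Fin d)} {t : ℝ} (hm : 0 < m)
    (ht : m ≤ sqDistCdf P x t) : 0 ≤ t := by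
  by_contra h
  push_neg at h
  have : {y : EuclideanSpace ℝ (Fin d) | ‖y - x‖ ^ 2 ≤ t} = ∅ := by
    ext y; simp only [mem_setOf_eq, mem_empty_iff_false, iff_false]
    nlinarith [norm_nonneg (y - x), sq_nonneg ‖y - x‖]
  rw [sqDistCdf, this] at ht
  simp at ht
  linarith

lemma aux_bddBelow (hm : 0 < m) (x : EuclideanSpace ℝ (Fin d)) :
    BddBelow {t : ℝ | m ≤ sqDistCdf P x t} :=
  ⟨0, fun t ht => aux_pos_mem P hm ht⟩

lemma aux_nonempty (hm : 0 < m) (hm1 : m < 1) (x : EuclideanSpace ℝ (Fin d)) :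
    {t : ℝ | m ≤ sqDistCdf P x t}.Nonempty := by
  have hmono : Monotone (fun n : ℕ => {y : EuclideanSpace ℝ (Fin d) | ‖y - x‖ ^ 2 ≤ n}) := by
    intro a b hab y hy
    simp only [mem_setOf_eq] at hy ⊢
    exact le_trans hy (by exact_mod_cast hab)
  have hU : ⋃ n : ℕ, {y : EuclideanSpace ℝ (Fin d) | ‖y - x‖ ^ 2 ≤ n} = univ := by
    ext y; simp only [mem_iUnion, mem_setOf_eq, mem_univ, iff_true]
    exact ⟨⌈‖y - x‖ ^ 2⌉₊, Nat.le_ceil _⟩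
  have htend : Filter.Tendsto (fun n : ℕ => P {y | ‖y - x‖ ^ 2 ≤ (n : ℝ)}) Filter.atTop
      (nhds (P univ)) := by
    rw [← hU]
    exact tendsto_measure_iUnion_atTop hmono
  rw [measure_univ] at htend
  have hlt : ENNReal.ofReal m < 1 := by
    rw [← ENNReal.ofReal_one]
    exact ENNReal.ofReal_lt_ofReal_iff_of_nonneg hm.le |>.mpr hm1
  obtain ⟨n, hn⟩ := (htend.eventually (eventually_gt_nhds hlt)).exists
  refine ⟨n, ?_⟩
  simp only [mem_setOf_eq, sqDistCdf]
  rw [← ENNReal.ofReal_le_iff_le_toReal (measure_ne_top P _)]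
  exact hn.le


lemma aux_mono {x : EuclideanSpace ℝ (Fin d)} {s t : ℝ} (hst : s ≤ t)
    (hs : m ≤ sqDistCdf P x s) : m ≤ sqDistCdf P x t := by
  refine le_trans hs ?_
  exact ENNReal.toReal_mono (measure_ne_top P _)
    (measure_mono fun y hy => le_trans hy hst)

lemma aux_quantile_mem (hm : 0 < m) (hm1 : m < 1) (x : EuclideanSpace ℝ (Fin d)) :
    m ≤ sqDistCdf P x (quantile (sqDistCdf P x) m) := by
  set q := quantile (sqDistCdf P x) m with hq
  have hne := aux_nonempty P hm hm1 x
  have hbd := aux_bddBelow P hm x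
  have hmem : ∀ n : ℕ, m ≤ sqDistCdf P x (q + 1 / (n + 1)) := by
    intro n
    obtain ⟨s, hs, hs'⟩ := Real.lt_sInf_add_pos hne
      (by positivity : (0:ℝ) < 1 / (n + 1))
    exact aux_mono P hs'.le hs
  have hMeas : ∀ t : ℝ, MeasurableSet {y : EuclideanSpace ℝ (Fin d) | ‖y - x‖ ^ 2 ≤ t} :=
    fun t => (isClosed_le (by fun_prop) continuous_const).measurableSet
  have hanti : Antitone (fun n : ℕ => {y : EuclideanSpace ℝ (Fin d) | ‖y - x‖ ^ 2 ≤ q + 1 / (n + 1)}) := by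
    intro a b hab y hy
    simp only [mem_setOf_eq] at hy ⊢
    have : (1 : ℝ) / (b + 1) ≤ 1 / (a + 1) := by
      apply one_div_le_one_div_of_le (by positivity)
      exact_mod_cast by omega
    linarith
  have hI : ⋂ n : ℕ, {y : EuclideanSpace ℝ (Fin d) | ‖y - x‖ ^ 2 ≤ q + 1 / (n + 1)}
      = {y : EuclideanSpace ℝ (Fin d) | ‖y - x‖ ^ 2 ≤ q} := by
    ext y
    simp only [mem_iInter, mem_setOf_eq]
    constructor
    · intro h
      by_contra hc
      push_neg at hc
      obtain ⟨n, hn⟩ := exists_nat_one_div_lt (by linarith : (0:ℝ) < ‖y - x‖ ^ 2 - q)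
      have := h n
      linarith
    · intro h n
      have : (0:ℝ) < 1 / (n + 1) := by positivity
      linarith
  have htend := tendsto_measure_iInter_atTop (fun n => (hMeas _).nullMeasurableSet) hanti
    ⟨0, measure_ne_top P _⟩
  rw [hI] at htend
  have hle : ENNReal.ofReal m ≤ P {y : EuclideanSpace ℝ (Fin d) | ‖y - x‖ ^ 2 ≤ q} := by
    refine ge_of_tendsto htend (Filter.Eventually.of_forall fun n => ?_)
    exact (ENNReal.ofReal_le_iff_le_toReal (measure_ne_top P _)).mpr (hmem n)
  exact (ENNReal.ofReal_le_iff_le_toReal (measure_ne_top P _)).mp hle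

lemma aux_q_nonneg (hm : 0 < m) (x : EuclideanSpace ℝ (Fin d)) :
    0 ≤ quantile (sqDistCdf P x) m :=
  Real.sInf_nonneg fun _ ht => aux_pos_mem P hm ht

lemma aux_sqrt_lip (hm : 0 < m) (hm1 : m < 1) (x x' : EuclideanSpace ℝ (Fin d)) :
    Real.sqrt (quantile (sqDistCdf P x') m)
      ≤ Real.sqrt (quantile (sqDistCdf P x) m) + ‖x' - x‖ := by
  set q := quantile (sqDistCdf P x) m with hqdef
  have hq0 : 0 ≤ q := aux_q_nonneg P hm x
  set c := ‖x' - x‖ with hcdef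
  have hc0 : 0 ≤ c := norm_nonneg _
  have hsub : {y : EuclideanSpace ℝ (Fin d) | ‖y - x‖ ^ 2 ≤ q}
      ⊆ {y : EuclideanSpace ℝ (Fin d) | ‖y - x'‖ ^ 2 ≤ (Real.sqrt q + c) ^ 2} := by
    intro y hy
    simp only [mem_setOf_eq] at hy ⊢
    have h1 : ‖y - x‖ ≤ Real.sqrt q := (Real.le_sqrt (norm_nonneg _) hq0).mpr hy
    have h2 : ‖y - x'‖ ≤ ‖y - x‖ + ‖x - x'‖ := norm_sub_le_norm_sub_add_norm_sub _ _ _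
    have h3 : ‖x - x'‖ = c := norm_sub_rev x x'
    have h4 : ‖y - x'‖ ≤ Real.sqrt q + c := by linarith
    exact pow_le_pow_left₀ (norm_nonneg _) h4 2
  have hmem : m ≤ sqDistCdf P x' ((Real.sqrt q + c) ^ 2) := by
    refine le_trans (aux_quantile_mem P hm hm1 x) ?_
    exact ENNReal.toReal_mono (measure_ne_top P _) (measure_mono hsub)
  have hle : quantile (sqDistCdf P x') m ≤ (Real.sqrt q + c) ^ 2 :=
    csInf_le (aux_bddBelow P hm x') hmem
  calc Real.sqrt (quantile (sqDistCdf P x') m) ≤ Real.sqrt ((Real.sqrt q + c) ^ 2) :=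
        Real.sqrt_le_sqrt hle
    _ = Real.sqrt q + c := Real.sqrt_sq (by positivity)

end Aux

/-- over a compact set `𝒳`, the quantiles `F_x^{-1}(m)` are uniformly bounded
(`q_{P,𝒳}(m) = sup_{x ∈ 𝒳} F_x^{-1}(m) < ∞`) and
`x ↦ F_x^{-1}(m)` is Lipschitz with constant `2 √(q_{P,𝒳}(m))`. -/
theorem quantile_sqDist_lipschitz_on_compact {d : ℕ}
    (P : Measure (EuclideanSpace ℝ (Fin d))) [IsProbabilityMeasure P]
    (m : ℝ) (hm : m ∈ Set.Ioo (0 : ℝ) 1)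
    (𝒳 : Set (EuclideanSpace ℝ (Fin d))) (h𝒳 : IsCompact 𝒳) :
    BddAbove ((fun x => quantile (sqDistCdf P x) m) '' 𝒳) ∧
    ∀ x ∈ 𝒳, ∀ x' ∈ 𝒳,
      |quantile (sqDistCdf P x') m - quantile (sqDistCdf P x) m|
        ≤ 2 * Real.sqrt (sSup ((fun x => quantile (sqDistCdf P x) m) '' 𝒳)) * ‖x' - x‖ := by

  obtain ⟨hm0, hm1⟩ := hm
  have hbdd : BddAbove ((fun x => quantile (sqDistCdf P x) m) '' 𝒳) := by
    rcases 𝒳.eq_empty_or_nonempty with h | ⟨x0, hx0⟩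
    · simp [h]
    · obtain ⟨r, hr⟩ := h𝒳.isBounded.subset_closedBall x0
      refine ⟨(Real.sqrt (quantile (sqDistCdf P x0) m) + r) ^ 2, ?_⟩
      rintro _ ⟨x, hx, rfl⟩
      have hdist : ‖x - x0‖ ≤ r := by
        have := hr hx
        rwa [Metric.mem_closedBall, dist_eq_norm] at this
      have h1 : Real.sqrt (quantile (sqDistCdf P x) m)
          ≤ Real.sqrt (quantile (sqDistCdf P x0) m) + r :=
        le_trans (aux_sqrt_lip P hm0 hm1 x0 x) (by linarith)
      have h2 : quantile (sqDistCdf P x) m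
          = Real.sqrt (quantile (sqDistCdf P x) m) ^ 2 :=
        (Real.sq_sqrt (aux_q_nonneg P hm0 x)).symm
      simp only []
      rw [h2]
      exact pow_le_pow_left₀ (Real.sqrt_nonneg _) h1 2
  refine ⟨hbdd, fun x hx x' hx' => ?_⟩
  set Q := sSup ((fun x => quantile (sqDistCdf P x) m) '' 𝒳) with hQ
  have hxQ : quantile (sqDistCdf P x) m ≤ Q := le_csSup hbdd ⟨x, hx, rfl⟩
  have hx'Q : quantile (sqDistCdf P x') m ≤ Q := le_csSup hbdd ⟨x', hx', rfl⟩
  set a := Real.sqrt (quantile (sqDistCdf P x') m) with ha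
  set b := Real.sqrt (quantile (sqDistCdf P x) m) with hb
  have ha0 : 0 ≤ a := Real.sqrt_nonneg _
  have hb0 : 0 ≤ b := Real.sqrt_nonneg _
  have haQ : a ≤ Real.sqrt Q := Real.sqrt_le_sqrt hx'Q
  have hbQ : b ≤ Real.sqrt Q := Real.sqrt_le_sqrt hxQ
  have hlip1 : a ≤ b + ‖x' - x‖ := aux_sqrt_lip P hm0 hm1 x x'
  have hlip2 : b ≤ a + ‖x' - x‖ := by
    have := aux_sqrt_lip P hm0 hm1 x' x
    rwa [norm_sub_rev] at this
  have habs : |a - b| ≤ ‖x' - x‖ := abs_sub_le_iff.mpr ⟨by linarith, by linarith⟩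
  have e1 : quantile (sqDistCdf P x') m = a ^ 2 :=
    (Real.sq_sqrt (aux_q_nonneg P hm0 x')).symm
  have e2 : quantile (sqDistCdf P x) m = b ^ 2 :=
    (Real.sq_sqrt (aux_q_nonneg P hm0 x)).symm
  rw [e1, e2]
  have key : |a ^ 2 - b ^ 2| = |a - b| * (a + b) := by
    rw [sq_sub_sq, abs_mul, abs_of_nonneg (by linarith)]
    ring
  rw [key]
  calc |a - b| * (a + b) ≤ ‖x' - x‖ * (Real.sqrt Q + Real.sqrt Q) :=
        mul_le_mul habs (add_le_add haQ hbQ) (by linarith) (norm_nonneg _)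
    _ = 2 * Real.sqrt Q * ‖x' - x‖ := by ring
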